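/- (Asymptotic linearity of the logit in the sample size, negative slope case) Let a < 0 and c ∈ ℝ. Then logit( Φ(a·√n − c) ) / n converges to −a²/2 as n → ∞ (n a real variable). -/

import Mathlib

open Real Filter MeasureTheory

/-- The standard normal density `φ(t) = (2π)^{-1/2} exp(-t²/2)`. -/
noncomputable def stdNormalPDF (t : ℝ) : ℝ :=
  (Real.sqrt (2 * Real.pi))⁻¹ * Real.exp (-(t ^ 2) / 2)

/-- The standard normal CDF `Φ(x) = ∫_{-∞}^x φ(t) dt`. -/
noncomputable def stdNormalCDF (x : ℝ) : ℝ :=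
  ∫ t in Set.Iic x, stdNormalPDF t

/-- `logit(x) = log(x) − log(1−x)`. -/
noncomputable def logit (x : ℝ) : ℝ :=
  Real.log x - Real.log (1 - x)

lemma stdNormalPDF_pos (t : ℝ) : 0 < stdNormalPDF t := by
  unfold stdNormalPDF; positivity

lemma integrable_stdNormalPDF : Integrable stdNormalPDF := by
  have h := (integrable_exp_neg_mul_sq (by norm_num : (0:ℝ) < 1/2)).const_mul
    (Real.sqrt (2 * Real.pi))⁻¹
  refine h.congr (Filter.Eventually.of_forall fun t => ?_)
  unfold stdNormalPDF; ring_nf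

lemma integrable_mul_stdNormalPDF : Integrable (fun t => t * stdNormalPDF t) := by
  have h := (integrable_mul_exp_neg_mul_sq (by norm_num : (0:ℝ) < 1/2)).const_mul
    (Real.sqrt (2 * Real.pi))⁻¹
  refine h.congr (Filter.Eventually.of_forall fun t => ?_)
  unfold stdNormalPDF; ring_nf

lemma hasDerivAt_neg_pdf (t : ℝ) :
    HasDerivAt (fun s => -stdNormalPDF s) (t * stdNormalPDF t) t := by
  unfold stdNormalPDF
  have h1 : HasDerivAt (fun s : ℝ => -(s ^ 2) / 2) (-t) t := by
    have h := ((hasDerivAt_pow 2 t).neg).div_const 2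
    exact h.congr_deriv (by ring)
  have h2 := ((h1.exp.const_mul (Real.sqrt (2 * Real.pi))⁻¹).neg)
  exact h2.congr_deriv (by ring)

lemma tendsto_neg_pdf_atBot : Tendsto (fun s => -stdNormalPDF s) atBot (nhds 0) := by
  have h2 : Tendsto (fun s : ℝ => s ^ 2) atBot atTop := by
    have hneg : Tendsto (fun s : ℝ => -s) atBot atTop := tendsto_neg_atBot_atTop
    have hp : Tendsto (fun u : ℝ => u ^ 2) atTop atTop :=
      tendsto_pow_atTop (by norm_num)
    have h := hp.comp hneg
    simpa [Function.comp_def, neg_sq] using h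
  have h3 : Tendsto (fun s : ℝ => -(s ^ 2) / 2) atBot atBot :=
    (tendsto_neg_atTop_atBot.comp h2).atBot_div_const (by norm_num)
  have h4 : Tendsto (fun s : ℝ => Real.exp (-(s ^ 2) / 2)) atBot (nhds 0) :=
    Real.tendsto_exp_atBot.comp h3
  have h5 := (h4.const_mul (Real.sqrt (2 * Real.pi))⁻¹).neg
  unfold stdNormalPDF
  simpa using h5

lemma integral_mul_pdf_Iic (x : ℝ) :
    ∫ t in Set.Iic x, t * stdNormalPDF t = -stdNormalPDF x := by
  have hd : ∀ t ∈ Set.Iic x, HasDerivAt (fun s => -stdNormalPDF s) (t * stdNormalPDF t) t :=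
    fun t _ => hasDerivAt_neg_pdf t
  have := integral_Iic_of_hasDerivAt_of_tendsto' hd
    integrable_mul_stdNormalPDF.integrableOn tendsto_neg_pdf_atBot
  simpa using this

lemma cdf_le_pdf_div {x : ℝ} (hx : x < 0) : stdNormalCDF x ≤ stdNormalPDF x / (-x) := by
  have hint2 : Integrable (fun t => (t / x) * stdNormalPDF t) := by
    refine (integrable_mul_stdNormalPDF.div_const x).congr
      (Filter.Eventually.of_forall fun t => ?_)
    ring
  have h1 : stdNormalCDF x ≤ ∫ t in Set.Iic x, (t / x) * stdNormalPDF t := by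
    unfold stdNormalCDF
    refine setIntegral_mono_on integrable_stdNormalPDF.integrableOn
      hint2.integrableOn measurableSet_Iic (fun t ht => ?_)
    have htx : t ≤ x := ht
    have h0 : (0:ℝ) ≤ (t - x) / x := div_nonneg_of_nonpos (by linarith) hx.le
    rw [sub_div, div_self hx.ne] at h0
    nlinarith [stdNormalPDF_pos t]
  have h2 : ∫ t in Set.Iic x, (t / x) * stdNormalPDF t = stdNormalPDF x / (-x) := by
    have he : ∀ t : ℝ, (t / x) * stdNormalPDF t = x⁻¹ * (t * stdNormalPDF t) := fun t => by ring
    simp_rw [he]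
    rw [MeasureTheory.integral_const_mul, integral_mul_pdf_Iic]
    field_simp
  rw [h2] at h1
  exact h1

lemma pdf_le_cdf {x : ℝ} (hx : x < 0) : stdNormalPDF (x - 1) ≤ stdNormalCDF x := by
  have h1 : ∫ t in Set.Ioc (x - 1) x, stdNormalPDF t ≤ stdNormalCDF x := by
    refine setIntegral_mono_set integrable_stdNormalPDF.integrableOn
      (Filter.Eventually.of_forall fun t => (stdNormalPDF_pos t).le)
      (HasSubset.Subset.eventuallyLE fun t ht => ht.2)
  have h2 : stdNormalPDF (x - 1) ≤ ∫ t in Set.Ioc (x - 1) x, stdNormalPDF t := by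
    have hconst : ∫ _t in Set.Ioc (x - 1) x, stdNormalPDF (x - 1) = stdNormalPDF (x - 1) := by
      rw [setIntegral_const]
      simp [Real.volume_Ioc]
    rw [← hconst]
    refine setIntegral_mono_on (integrableOn_const (by simp [Real.volume_Ioc]))
      integrable_stdNormalPDF.integrableOn measurableSet_Ioc (fun t ht => ?_)
    unfold stdNormalPDF
    have ht2 : t ^ 2 ≤ (x - 1) ^ 2 := by nlinarith [ht.1, ht.2]
    exact mul_le_mul_of_nonneg_left (Real.exp_le_exp.2 (by linarith)) (by positivity)
  linarith

lemma log_pdf (y : ℝ) :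
    Real.log (stdNormalPDF y) = -Real.log (Real.sqrt (2 * Real.pi)) - y ^ 2 / 2 := by
  unfold stdNormalPDF
  rw [Real.log_mul (by positivity) (Real.exp_ne_zero _), Real.log_inv, Real.log_exp]
  ring

lemma cdf_le_half {x : ℝ} (hx : x ≤ -1) : stdNormalCDF x ≤ 1 / 2 := by
  have h1 : stdNormalCDF x ≤ stdNormalPDF x / (-x) := cdf_le_pdf_div (by linarith)
  have h2 : stdNormalPDF x / (-x) ≤ stdNormalPDF x := by
    rw [div_le_iff₀ (by linarith)]
    nlinarith [stdNormalPDF_pos x]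
  have h3 : stdNormalPDF x ≤ (Real.sqrt (2 * Real.pi))⁻¹ := by
    unfold stdNormalPDF
    have := Real.exp_le_one_iff.2 (by nlinarith [sq_nonneg x] : -(x ^ 2) / 2 ≤ 0)
    nlinarith [Real.sqrt_pos.2 (by positivity : (0:ℝ) < 2 * Real.pi), this,
      Real.exp_pos (-(x ^ 2) / 2), inv_pos.2 (Real.sqrt_pos.2 (by positivity : (0:ℝ) < 2 * Real.pi))]
  have h4 : (2:ℝ) ≤ Real.sqrt (2 * Real.pi) :=
    Real.le_sqrt_of_sq_le (by nlinarith [Real.pi_gt_three])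
  have h5 : (Real.sqrt (2 * Real.pi))⁻¹ ≤ 1 / 2 := by
    rw [inv_le_comm₀ (by linarith) (by norm_num)]
    simpa using h4
  linarith

lemma tendsto_sqrt_atTop' : Tendsto Real.sqrt atTop atTop := by
  refine tendsto_atTop_atTop.2 fun b => ⟨b ^ 2, fun x hx => ?_⟩
  calc b ≤ |b| := le_abs_self b
    _ = Real.sqrt (b ^ 2) := (Real.sqrt_sq_eq_abs b).symm
    _ ≤ Real.sqrt x := Real.sqrt_le_sqrt hx

lemma aux_tendsto (a b K : ℝ) :
    Tendsto (fun n : ℝ => (K - (a * Real.sqrt n - b) ^ 2 / 2) / n) atTop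
      (nhds (-(a ^ 2) / 2)) := by
  have h1 : Tendsto (fun n : ℝ => (Real.sqrt n)⁻¹) atTop (nhds 0) :=
    tendsto_sqrt_atTop'.inv_tendsto_atTop
  have h2 : Tendsto (fun n : ℝ => n⁻¹) atTop (nhds 0) := tendsto_inv_atTop_zero
  have key : Tendsto
      (fun n : ℝ => -(a ^ 2) / 2 + (a * b) * (Real.sqrt n)⁻¹ + (K - b ^ 2 / 2) * n⁻¹)
      atTop (nhds (-(a ^ 2) / 2)) := by
    have h := ((tendsto_const_nhds : Tendsto (fun _ : ℝ => -(a ^ 2) / 2) atTop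
      (nhds (-(a ^ 2) / 2))).add (h1.const_mul (a * b))).add (h2.const_mul (K - b ^ 2 / 2))
    simpa using h
  refine key.congr' ?_
  filter_upwards [eventually_gt_atTop 0] with n hn
  have hs : 0 < Real.sqrt n := Real.sqrt_pos.2 hn
  have hsq : Real.sqrt n * Real.sqrt n = n := Real.mul_self_sqrt hn.le
  have hsq2 : Real.sqrt n ^ 2 = n := Real.sq_sqrt hn.le
  field_simp
  linear_combination (a ^ 2 * Real.sqrt n - 2 * a * b) * hsq2

/-- (Asymptotic linearity of the logit in the sample size, negative slope case)
Let `a < 0` and `c ∈ ℝ`. Then `logit(Φ(a·√n − c))/n → −a²/2` as `n → ∞`. -/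
theorem tendsto_logit_div_n_neg (a c : ℝ) (ha : a < 0) :
    Tendsto (fun n : ℝ => logit (stdNormalCDF (a * Real.sqrt n - c)) / n) atTop
      (nhds (-(a ^ 2) / 2)) := by
  have hL : Tendsto (fun n : ℝ =>
      (-Real.log (Real.sqrt (2 * Real.pi)) - (a * Real.sqrt n - (c + 1)) ^ 2 / 2) / n) atTop
      (nhds (-(a ^ 2) / 2)) :=
    aux_tendsto a (c + 1) (-Real.log (Real.sqrt (2 * Real.pi)))
  have hU : Tendsto (fun n : ℝ =>
      (Real.log 2 - Real.log (Real.sqrt (2 * Real.pi)) - (a * Real.sqrt n - c) ^ 2 / 2) / n) atTop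
      (nhds (-(a ^ 2) / 2)) := by
    have h := aux_tendsto a c (Real.log 2 - Real.log (Real.sqrt (2 * Real.pi)))
    refine h.congr fun n => by ring_nf
  have hev : ∀ᶠ n in atTop, a * Real.sqrt n - c ≤ -1 ∧ 0 < n := by
    have h1 := tendsto_sqrt_atTop'.eventually_ge_atTop ((c - 1) / a)
    filter_upwards [h1, eventually_gt_atTop 0] with n hn hn0
    refine ⟨?_, hn0⟩
    have h2 := mul_le_mul_of_nonpos_left hn ha.le
    rw [mul_div_cancel₀ _ ha.ne] at h2
    linarith
  refine tendsto_of_tendsto_of_tendsto_of_le_of_le' hL hU ?_ ?_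
  · filter_upwards [hev] with n hn
    obtain ⟨hx, hn0⟩ := hn
    set x := a * Real.sqrt n - c with hxdef
    have hx0 : x < 0 := by linarith
    have hcpos : 0 < stdNormalCDF x := lt_of_lt_of_le (stdNormalPDF_pos _) (pdf_le_cdf hx0)
    have hhalf : stdNormalCDF x ≤ 1 / 2 := cdf_le_half hx
    have hlog1 : -Real.log (Real.sqrt (2 * Real.pi)) - (x - 1) ^ 2 / 2
        ≤ Real.log (stdNormalCDF x) := by
      rw [← log_pdf (x - 1)]
      exact Real.log_le_log (stdNormalPDF_pos _) (pdf_le_cdf hx0)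
    have hlog2 : Real.log (1 - stdNormalCDF x) ≤ 0 :=
      Real.log_nonpos (by linarith) (by linarith)
    have hx1 : a * Real.sqrt n - (c + 1) = x - 1 := by rw [hxdef]; ring
    rw [hx1]
    rw [div_le_div_iff_of_pos_right hn0]
    unfold logit
    linarith
  · filter_upwards [hev] with n hn
    obtain ⟨hx, hn0⟩ := hn
    set x := a * Real.sqrt n - c with hxdef
    have hx0 : x < 0 := by linarith
    have hcpos : 0 < stdNormalCDF x := lt_of_lt_of_le (stdNormalPDF_pos _) (pdf_le_cdf hx0)
    have hhalf : stdNormalCDF x ≤ 1 / 2 := cdf_le_half hx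
    have hlog1 : Real.log (stdNormalCDF x)
        ≤ -Real.log (Real.sqrt (2 * Real.pi)) - x ^ 2 / 2 := by
      rw [← log_pdf x]
      refine Real.log_le_log hcpos ?_
      calc stdNormalCDF x ≤ stdNormalPDF x / (-x) := cdf_le_pdf_div hx0
        _ ≤ stdNormalPDF x := by
          rw [div_le_iff₀ (by linarith)]
          nlinarith [stdNormalPDF_pos x]
    have hlog2 : -Real.log 2 ≤ Real.log (1 - stdNormalCDF x) := by
      rw [← Real.log_inv]
      exact Real.log_le_log (by norm_num) (by linarith)
    rw [div_le_div_iff_of_pos_right hn0]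
    unfold logit
    linarith
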